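/- arXiv:2501.19330 — 5 statements merged into one kernel-verified Lean document; each statement's English description precedes it below -/
import Mathlib

section
/- Let F₃ be the free group on three generators x, y, z. The homomorphism φ from the free group F₂ on two generators e₁, e₂ to F₃ determined by φ(e₁) = x and φ(e₂) = (x y⁻¹ x⁻¹ z⁻¹ x y x⁻¹) · (z x⁻¹ z⁻¹) · (x y⁻¹ x⁻¹ z x y x⁻¹) is injective. -/
namespace Claim31

open FreeGroup

set_option linter.unusedSectionVars false

variable {α : Type*} [DecidableEq α]

lemma mk_single_mul_toWord (a : α) (b : Bool) (g : FreeGroup α)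
    (h : g.toWord.head? ≠ some (a, !b)) :
    (FreeGroup.mk [(a, b)] * g).toWord = (a, b) :: g.toWord := by
  conv_lhs => rw [← FreeGroup.mk_toWord (x := g)]
  rw [FreeGroup.mul_mk, FreeGroup.toWord_mk, List.singleton_append, FreeGroup.reduce.cons,
    g.reduce_toWord]
  cases hw : g.toWord with
  | nil => rfl
  | cons hd tl =>
    rw [hw] at h
    have : ¬ ((a, b).1 = hd.1 ∧ (a,b).2 = !hd.2) := by
      rintro ⟨h1, h2⟩
      apply h
      simp only [List.head?_cons, Option.some.injEq]
      obtain ⟨c, d⟩ := hd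
      simp_all
    simp only [this, if_false]

lemma mk_single_mul_cancel (a : α) (b : Bool) (g : FreeGroup α) (t : List (α × Bool))
    (h : g.toWord = (a, !b) :: t) :
    (FreeGroup.mk [(a, b)] * g).toWord = t := by
  conv_lhs => rw [← FreeGroup.mk_toWord (x := g)]
  rw [FreeGroup.mul_mk, FreeGroup.toWord_mk, List.singleton_append, FreeGroup.reduce.cons,
    g.reduce_toWord, h]
  simp

lemma of_eq_mk (a : α) : FreeGroup.of a = FreeGroup.mk [(a, true)] := rfl

lemma inv_of_eq_mk (a : α) : (FreeGroup.of a)⁻¹ = FreeGroup.mk [(a, false)] := by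
  rw [of_eq_mk, FreeGroup.inv_mk]; rfl

lemma of_mul_toWord (a : α) (g : FreeGroup α) (h : g.toWord.head? ≠ some (a, false)) :
    (FreeGroup.of a * g).toWord = (a, true) :: g.toWord := by
  rw [of_eq_mk]; exact mk_single_mul_toWord a true g h

lemma inv_of_mul_toWord (a : α) (g : FreeGroup α) (h : g.toWord.head? ≠ some (a, true)) :
    ((FreeGroup.of a)⁻¹ * g).toWord = (a, false) :: g.toWord := by
  rw [inv_of_eq_mk]; exact mk_single_mul_toWord a false g h

lemma of_mul_cancel (a : α) (g : FreeGroup α) (t : List (α × Bool))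
    (h : g.toWord = (a, false) :: t) :
    (FreeGroup.of a * g).toWord = t := by
  rw [of_eq_mk]; exact mk_single_mul_cancel a true g t h

lemma inv_of_mul_cancel (a : α) (g : FreeGroup α) (t : List (α × Bool))
    (h : g.toWord = (a, true) :: t) :
    ((FreeGroup.of a)⁻¹ * g).toWord = t := by
  rw [inv_of_eq_mk]; exact mk_single_mul_cancel a false g t h

/-! Specific computations in `FreeGroup (Fin 3)`. -/

local notation "x" => FreeGroup.of (0 : Fin 3)
local notation "y" => FreeGroup.of (1 : Fin 3)
local notation "z" => FreeGroup.of (2 : Fin 3)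

/-- `d = z⁻¹ x y⁻¹ x⁻¹ z x`; multiplying a word starting with `y` by `d` just prepends. -/
lemma d_mul (h : FreeGroup (Fin 3)) (hh : h.toWord.head? = some (1, true)) :
    ((z)⁻¹ * ((x) * ((y)⁻¹ * ((x)⁻¹ * ((z) * ((x) * h)))))).toWord =
      (2, false) :: (0, true) :: (1, false) :: (0, false) :: (2, true) :: (0, true) ::
        h.toWord := by
  have h1 : ((x) * h).toWord = (0, true) :: h.toWord :=
    of_mul_toWord 0 h (by rw [hh]; simp)
  have h2 : ((z) * ((x) * h)).toWord = (2, true) :: (0, true) :: h.toWord := by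
    rw [of_mul_toWord 2 _ (by rw [h1]; simp), h1]
  have h3 : ((x)⁻¹ * ((z) * ((x) * h))).toWord
      = (0, false) :: (2, true) :: (0, true) :: h.toWord := by
    rw [inv_of_mul_toWord 0 _ (by rw [h2]; simp), h2]
  have h4 : ((y)⁻¹ * ((x)⁻¹ * ((z) * ((x) * h)))).toWord
      = (1, false) :: (0, false) :: (2, true) :: (0, true) :: h.toWord := by
    rw [inv_of_mul_toWord 1 _ (by rw [h3]; simp), h3]
  have h5 : ((x) * ((y)⁻¹ * ((x)⁻¹ * ((z) * ((x) * h))))).toWord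
      = (0, true) :: (1, false) :: (0, false) :: (2, true) :: (0, true) :: h.toWord := by
    rw [of_mul_toWord 0 _ (by rw [h4]; simp), h4]
  rw [inv_of_mul_toWord 2 _ (by rw [h5]; simp), h5]

/-- multiplying by `m = y x y⁻¹` produces a word starting with `y x`. -/
lemma m_mul (h : FreeGroup (Fin 3)) (hnp : ¬ ([(1, true), (0, false)] <+: h.toWord)) :
    [(1, true), (0, true)] <+: ((y) * ((x) * ((y)⁻¹ * h))).toWord := by
  by_cases hc : h.toWord.head? = some (1, true)
  · obtain ⟨t, ht⟩ : ∃ t, h.toWord = (1, true) :: t := by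
      cases hw : h.toWord with
      | nil => rw [hw] at hc; simp at hc
      | cons hd tl => rw [hw] at hc; simp at hc; exact ⟨tl, by rw [hc]⟩
    have h1 : ((y)⁻¹ * h).toWord = t := inv_of_mul_cancel 1 h t ht
    have htt : t.head? ≠ some (0, false) := by
      intro hh
      apply hnp
      cases t with
      | nil => simp at hh
      | cons a s => simp at hh; rw [ht, hh]; exact ⟨s, rfl⟩
    have h2 : ((x) * ((y)⁻¹ * h)).toWord = (0, true) :: t := by
      rw [of_mul_toWord 0 _ (by rw [h1]; exact htt), h1]
    rw [of_mul_toWord 1 _ (by rw [h2]; simp), h2]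
    exact ⟨t, rfl⟩
  · have h1 : ((y)⁻¹ * h).toWord = (1, false) :: h.toWord :=
      inv_of_mul_toWord 1 h hc
    have h2 : ((x) * ((y)⁻¹ * h)).toWord = (0, true) :: (1, false) :: h.toWord := by
      rw [of_mul_toWord 0 _ (by rw [h1]; simp), h1]
    rw [of_mul_toWord 1 _ (by rw [h2]; simp), h2]
    exact ⟨(1, false) :: h.toWord, rfl⟩

/-- multiplying by `m⁻¹ = y x⁻¹ y⁻¹` produces a word starting with `y x⁻¹`. -/
lemma minv_mul (h : FreeGroup (Fin 3)) (hnp : ¬ ([(1, true), (0, true)] <+: h.toWord)) :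
    [(1, true), (0, false)] <+: ((y) * ((x)⁻¹ * ((y)⁻¹ * h))).toWord := by
  by_cases hc : h.toWord.head? = some (1, true)
  · obtain ⟨t, ht⟩ : ∃ t, h.toWord = (1, true) :: t := by
      cases hw : h.toWord with
      | nil => rw [hw] at hc; simp at hc
      | cons hd tl => rw [hw] at hc; simp at hc; exact ⟨tl, by rw [hc]⟩
    have h1 : ((y)⁻¹ * h).toWord = t := inv_of_mul_cancel 1 h t ht
    have htt : t.head? ≠ some (0, true) := by
      intro hh
      apply hnp
      cases t with
      | nil => simp at hh
      | cons a s => simp at hh; rw [ht, hh]; exact ⟨s, rfl⟩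
    have h2 : ((x)⁻¹ * ((y)⁻¹ * h)).toWord = (0, false) :: t := by
      rw [inv_of_mul_toWord 0 _ (by rw [h1]; exact htt), h1]
    rw [of_mul_toWord 1 _ (by rw [h2]; simp), h2]
    exact ⟨t, rfl⟩
  · have h1 : ((y)⁻¹ * h).toWord = (1, false) :: h.toWord :=
      inv_of_mul_toWord 1 h hc
    have h2 : ((x)⁻¹ * ((y)⁻¹ * h)).toWord = (0, false) :: (1, false) :: h.toWord := by
      rw [inv_of_mul_toWord 0 _ (by rw [h1]; simp), h1]
    rw [of_mul_toWord 1 _ (by rw [h2]; simp), h2]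
    exact ⟨(1, false) :: h.toWord, rfl⟩

def D6 : List (Fin 3 × Bool) :=
  [(2, false), (0, true), (1, false), (0, false), (2, true), (0, true)]

def PX : List (Fin 3 × Bool) := D6 ++ [(1, true), (0, true)]
def PY : List (Fin 3 × Bool) := D6 ++ [(1, true), (0, false)]

noncomputable def dd : FreeGroup (Fin 3) := (z)⁻¹ * (x) * (y)⁻¹ * (x)⁻¹ * (z) * (x)
noncomputable def u : FreeGroup (Fin 3) := dd * ((y) * (x) * (y)⁻¹) * dd⁻¹
noncomputable def c : FreeGroup (Fin 3) :=
  (x) * (y)⁻¹ * (x)⁻¹ * (z)⁻¹ * (x) * (y) * (x)⁻¹ * (z)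

lemma ping0X (g : FreeGroup (Fin 3)) (hg : ¬ PY <+: g.toWord) : PX <+: (u * g).toWord := by
  set h : FreeGroup (Fin 3) := dd⁻¹ * g with hdef
  have step1 : ¬ [(1, true), (0, false)] <+: h.toWord := by
    intro hp
    obtain ⟨t, ht⟩ := hp
    apply hg
    have hh : h.toWord.head? = some (1, true) := by rw [← ht]; rfl
    have hgw := d_mul h hh
    have hgg : (z)⁻¹ * ((x) * ((y)⁻¹ * ((x)⁻¹ * ((z) * ((x) * h))))) = g := by
      rw [hdef, dd]; group
    rw [hgg] at hgw
    refine ⟨t, ?_⟩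
    rw [hgw, ← ht, PY, D6]
    rfl
  have hm := m_mul h step1
  obtain ⟨s, hs⟩ := hm
  have hh2 : ((y) * ((x) * ((y)⁻¹ * h))).toWord.head? = some (1, true) := by
    rw [← hs]; rfl
  have hkw := d_mul _ hh2
  have huk : (z)⁻¹ * ((x) * ((y)⁻¹ * ((x)⁻¹ * ((z) * ((x) * ((y) * ((x) * ((y)⁻¹ * h))))))))
      = u * g := by
    rw [hdef, u, dd]; group
  rw [huk] at hkw
  refine ⟨s, ?_⟩
  rw [hkw, ← hs, PX, D6]
  rfl

lemma ping0Y (g : FreeGroup (Fin 3)) (hg : ¬ PX <+: g.toWord) : PY <+: (u⁻¹ * g).toWord := by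
  set h : FreeGroup (Fin 3) := dd⁻¹ * g with hdef
  have step1 : ¬ [(1, true), (0, true)] <+: h.toWord := by
    intro hp
    obtain ⟨t, ht⟩ := hp
    apply hg
    have hh : h.toWord.head? = some (1, true) := by rw [← ht]; rfl
    have hgw := d_mul h hh
    have hgg : (z)⁻¹ * ((x) * ((y)⁻¹ * ((x)⁻¹ * ((z) * ((x) * h))))) = g := by
      rw [hdef, dd]; group
    rw [hgg] at hgw
    refine ⟨t, ?_⟩
    rw [hgw, ← ht, PX, D6]
    rfl
  have hm := minv_mul h step1
  obtain ⟨s, hs⟩ := hm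
  have hh2 : ((y) * ((x)⁻¹ * ((y)⁻¹ * h))).toWord.head? = some (1, true) := by
    rw [← hs]; rfl
  have hkw := d_mul _ hh2
  have huk : (z)⁻¹ * ((x) * ((y)⁻¹ * ((x)⁻¹ * ((z) * ((x) * ((y) * ((x)⁻¹ * ((y)⁻¹ * h))))))))
      = u⁻¹ * g := by
    rw [hdef, u, dd]; group
  rw [huk] at hkw
  refine ⟨s, ?_⟩
  rw [hkw, ← hs, PY, D6]
  rfl

noncomputable def src : Fin 2 → FreeGroup (Fin 3) := ![u, (x)⁻¹]

noncomputable def SX : Fin 2 → Set (FreeGroup (Fin 3)) :=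
  ![{g | PX <+: g.toWord}, {g | g.toWord.head? = some (0, false)}]

noncomputable def SY : Fin 2 → Set (FreeGroup (Fin 3)) :=
  ![{g | PY <+: g.toWord}, {g | g.toWord.head? = some (0, true)}]

lemma head_of_prefix {w : List (Fin 3 × Bool)} {p : List (Fin 3 × Bool)} {a : Fin 3 × Bool}
    (hp : (a :: p) <+: w) : w.head? = some a := by
  obtain ⟨t, ht⟩ := hp
  rw [← ht]; rfl

lemma src_injective : Function.Injective (FreeGroup.lift src) := by
  apply FreeGroup.injective_lift_of_ping_pong src SX SY
  · -- nonempty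
    intro i
    fin_cases i
    · refine ⟨FreeGroup.mk PX, ?_⟩
      show PX <+: (FreeGroup.mk PX).toWord
      rw [FreeGroup.toWord_mk]
      decide
    · refine ⟨(x)⁻¹, ?_⟩
      show ((x)⁻¹).toWord.head? = some (0, false)
      rw [inv_of_eq_mk, FreeGroup.toWord_mk]
      decide
  · -- X pairwise disjoint
    intro i j hij
    fin_cases i <;> fin_cases j <;> [skip; skip; skip; skip] <;>
      first
        | (exact absurd rfl hij)
        | (rw [Function.onFun, Set.disjoint_left]
           rintro g hg1 hg2
           first
             | (have hg1' : PX <+: g.toWord := hg1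
                have hg2' : g.toWord.head? = some ((0 : Fin 3), false) := hg2
                have h1 : g.toWord.head? = some ((2 : Fin 3), false) :=
                  head_of_prefix (a := ((2 : Fin 3), false)) hg1'
                simp_all)
             | (have hg1' : g.toWord.head? = some ((0 : Fin 3), false) := hg1
                have hg2' : PX <+: g.toWord := hg2
                have h1 : g.toWord.head? = some ((2 : Fin 3), false) :=
                  head_of_prefix (a := ((2 : Fin 3), false)) hg2'
                simp_all))
  · -- Y pairwise disjoint
    intro i j hij
    fin_cases i <;> fin_cases j <;> [skip; skip; skip; skip] <;>
      first
        | (exact absurd rfl hij)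
        | (rw [Function.onFun, Set.disjoint_left]
           rintro g hg1 hg2
           first
             | (have hg1' : PY <+: g.toWord := hg1
                have hg2' : g.toWord.head? = some ((0 : Fin 3), true) := hg2
                have h1 : g.toWord.head? = some ((2 : Fin 3), false) :=
                  head_of_prefix (a := ((2 : Fin 3), false)) hg1'
                simp_all)
             | (have hg1' : g.toWord.head? = some ((0 : Fin 3), true) := hg1
                have hg2' : PY <+: g.toWord := hg2
                have h1 : g.toWord.head? = some ((2 : Fin 3), false) :=
                  head_of_prefix (a := ((2 : Fin 3), false)) hg2'
                simp_all))
  · -- X/Y disjoint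
    intro i j
    fin_cases i <;> fin_cases j
    · rw [Set.disjoint_left]
      rintro g hg1 hg2
      have hg1' : PX <+: g.toWord := hg1
      have hg2' : PY <+: g.toWord := hg2
      rcases List.prefix_or_prefix_of_prefix hg1' hg2' with h | h
      · have := h.eq_of_length (by decide)
        exact absurd this (by decide)
      · have := h.eq_of_length (by decide)
        exact absurd this (by decide)
    · rw [Set.disjoint_left]
      rintro g hg1 hg2
      have hg1' : PX <+: g.toWord := hg1
      have hg2' : g.toWord.head? = some ((0 : Fin 3), true) := hg2
      have h1 : g.toWord.head? = some ((2 : Fin 3), false) :=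
        head_of_prefix (a := ((2 : Fin 3), false)) hg1'
      simp_all
    · rw [Set.disjoint_left]
      rintro g hg1 hg2
      have hg1' : g.toWord.head? = some ((0 : Fin 3), false) := hg1
      have hg2' : PY <+: g.toWord := hg2
      have h1 : g.toWord.head? = some ((2 : Fin 3), false) :=
        head_of_prefix (a := ((2 : Fin 3), false)) hg2'
      simp_all
    · rw [Set.disjoint_left]
      rintro g hg1 hg2
      have hg1' : g.toWord.head? = some ((0 : Fin 3), false) := hg1
      have hg2' : g.toWord.head? = some ((0 : Fin 3), true) := hg2
      simp_all
  · -- hX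
    intro i
    fin_cases i
    · rintro - ⟨g, hg, rfl⟩
      have hg' : ¬ PY <+: g.toWord := hg
      show PX <+: (Claim31.u * g).toWord
      exact ping0X g hg'
    · rintro - ⟨g, hg, rfl⟩
      have hg' : ¬ g.toWord.head? = some ((0 : Fin 3), true) := hg
      show ((x)⁻¹ * g).toWord.head? = some (0, false)
      rw [inv_of_mul_toWord 0 g hg']
      rfl
  · -- hY
    intro i
    fin_cases i
    · rintro - ⟨g, hg, rfl⟩
      have hg' : ¬ PX <+: g.toWord := hg
      show PY <+: ((Claim31.u)⁻¹ * g).toWord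
      exact ping0Y g hg'
    · rintro - ⟨g, hg, rfl⟩
      have hg' : ¬ g.toWord.head? = some ((0 : Fin 3), false) := hg
      show ((x) * g).toWord.head? = some (0, true)
      rw [of_mul_toWord 0 g hg']
      rfl

end Claim31

/-- Claim 3.1: the inclusion-induced map `π₁(F₁) → π₁(E(T))` is injective, expressed as
injectivity of the homomorphism `F₂ → F₃` of free groups determined by
`e₁ ↦ x` and `e₂ ↦ (x y⁻¹ x⁻¹ z⁻¹ x y x⁻¹) (z x⁻¹ z⁻¹) (x y⁻¹ x⁻¹ z x y x⁻¹)`. -/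
theorem claim_3_1 :
    let x : FreeGroup (Fin 3) := FreeGroup.of 0
    let y : FreeGroup (Fin 3) := FreeGroup.of 1
    let z : FreeGroup (Fin 3) := FreeGroup.of 2
    Function.Injective
      (FreeGroup.lift (fun i : Fin 2 =>
        if i = 0 then x
        else (x * y⁻¹ * x⁻¹ * z⁻¹ * x * y * x⁻¹) * (z * x⁻¹ * z⁻¹) *
          (x * y⁻¹ * x⁻¹ * z * x * y * x⁻¹))) := by
  intro x y z
  have hcomp : FreeGroup.lift (fun i : Fin 2 =>
        if i = 0 then x
        else (x * y⁻¹ * x⁻¹ * z⁻¹ * x * y * x⁻¹) * (z * x⁻¹ * z⁻¹) *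
          (x * y⁻¹ * x⁻¹ * z * x * y * x⁻¹))
      = (MulAut.conj Claim31.c).toMonoidHom.comp (FreeGroup.lift Claim31.src) := by
    ext i
    fin_cases i <;>
      simp only [FreeGroup.lift_apply_of, MonoidHom.coe_comp, Function.comp_apply,
        MulEquiv.coe_toMonoidHom, MulAut.conj_apply, Claim31.src, Claim31.c, Claim31.u,
        Claim31.dd, Fin.zero_eta, Fin.mk_one, Matrix.cons_val_zero, Matrix.cons_val_one,
        Matrix.head_cons, if_true, one_ne_zero, if_false, Fin.isValue, reduceIte] <;>
      group <;> rfl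
  rw [hcomp]
  exact (MulAut.conj Claim31.c).injective.comp Claim31.src_injective
end

section
/- Let F₃ be the free group on three generators x, y, z. The homomorphism φ from the free group F₂ on two generators e₁, e₂ to F₃ determined by φ(e₁) = y and φ(e₂) = (z x⁻¹ z⁻¹) · (x y⁻¹ x⁻¹) · (z x z⁻¹) is injective. -/
set_option linter.unusedSectionVars false

namespace Claim32

open FreeGroup List

variable {α : Type*} [DecidableEq α]

/-- non-cancellation of adjacent letters -/
def nc : (α × Bool) → (α × Bool) → Prop := fun p q => ¬(p.1 = q.1 ∧ p.2 = !q.2)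

instance : DecidableRel (nc (α := α)) := fun _ _ => by unfold nc; infer_instance

lemma reduce_cons_nil {L : List (α × Bool)} (x : α × Bool) (h : reduce L = []) :
    reduce (x :: L) = [x] := by
  rw [reduce.cons, h]

lemma reduce_cons_cancel {L tl : List (α × Bool)} {hd : α × Bool} (x : α × Bool)
    (h : reduce L = hd :: tl) (hc : x.1 = hd.1 ∧ x.2 = !hd.2) :
    reduce (x :: L) = tl := by
  rw [reduce.cons, h]
  exact if_pos hc

lemma reduce_cons_nocancel {L tl : List (α × Bool)} {hd : α × Bool} (x : α × Bool)
    (h : reduce L = hd :: tl) (hc : nc x hd) :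
    reduce (x :: L) = x :: hd :: tl := by
  rw [reduce.cons, h]
  exact if_neg hc

lemma reduce_eq_self_of_chain : ∀ {M : List (α × Bool)}, M.Chain' nc → reduce M = M := by
  intro M
  induction M with
  | nil => intro _; rfl
  | cons x T ih =>
    intro h
    rw [List.Chain', List.isChain_cons] at h
    have hT := ih h.2
    cases T with
    | nil => exact reduce_cons_nil x hT
    | cons hd tl => exact reduce_cons_nocancel x hT (h.1 hd rfl)

lemma reduced_tail {x : α × Bool} {T : List (α × Bool)} (h : reduce (x :: T) = x :: T) :
    reduce T = T := by
  cases r : reduce T with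
  | nil =>
    have : reduce (x :: T) = [x] := reduce_cons_nil x r
    rw [h] at this
    have hT : T = [] := by injection this
    subst hT; exact r
  | cons hd tl =>
    by_cases hc : x.1 = hd.1 ∧ x.2 = !hd.2
    · have h2 : reduce (x :: T) = tl := reduce_cons_cancel x r hc
      rw [h] at h2
      -- h2 : x :: T = tl, but tl is shorter than T
      have hsub : reduce T <+ T := Red.sublist reduce.red
      rw [r] at hsub
      have := hsub.length_le
      rw [← h2] at this
      simp at this
    · have h2 : reduce (x :: T) = x :: hd :: tl := reduce_cons_nocancel x r hc
      rw [h] at h2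
      have : T = hd :: tl := by injection h2
      rw [this, ← r, this]

lemma chain_of_reduce_eq_self : ∀ {M : List (α × Bool)}, reduce M = M → M.Chain' nc := by
  intro M
  induction M with
  | nil => intro _; exact List.isChain_nil
  | cons x T ih =>
    intro h
    have hT := reduced_tail h
    rw [List.Chain', List.isChain_cons]
    refine ⟨?_, ih hT⟩
    intro y hy hcon
    cases T with
    | nil => simp at hy
    | cons hd tl =>
      obtain rfl : hd = y := by simpa using hy
      have h2 : reduce (x :: hd :: tl) = tl := reduce_cons_cancel x hT hcon
      rw [h] at h2
      have := congrArg List.length h2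
      simp at this
      omega

/-- key computation: multiplication when cancellation is exactly `P` -/
lemma toWord_mul_eq (w g : FreeGroup α) (U P M : List (α × Bool))
    (hg : g.toWord = P ++ M)
    (hwP : w * mk P = mk U)
    (hU : U.Chain' nc)
    (hj : ∀ p ∈ U.getLast?, ∀ q ∈ M.head?, nc p q) :
    (w * g).toWord = U ++ M := by
  have hgm : g = mk P * mk M := by
    rw [mul_mk, ← hg, mk_toWord]
  have hchain : (P ++ M).Chain' nc := by
    apply chain_of_reduce_eq_self
    rw [← hg]
    exact reduce_toWord g
  have hM : M.Chain' nc := (List.isChain_append.1 hchain).2.1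
  have hmul : w * g = mk (U ++ M) := by
    rw [hgm, ← mul_assoc, hwP, mul_mk]
  rw [hmul, toWord_mk, reduce_eq_self_of_chain (List.isChain_append.2 ⟨hU, hM, hj⟩)]

lemma junc {U M : List (α × Bool)} {v : α × Bool}
    (hU : U.getLast? = some v) (hM : M.head? ≠ some (v.1, !v.2)) :
    ∀ p ∈ U.getLast?, ∀ q ∈ M.head?, nc p q := by
  intro p hp q hq hcon
  rw [Option.mem_def, hU, Option.some.injEq] at hp
  subst hp
  rw [Option.mem_def] at hq
  apply hM
  rw [hq]
  obtain ⟨q1, q2⟩ := q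
  obtain ⟨h1, h2⟩ := hcon
  simp at h1 h2 ⊢
  exact ⟨h1.symm, by simp [h2]⟩


/-- the word of `c = z x⁻¹ z⁻¹ x` -/
def C4 : List (Fin 3 × Bool) := [(2,true),(0,false),(2,false),(0,true)]
/-- the word of `c⁻¹` -/
def Ci4 : List (Fin 3 × Bool) := [(0,false),(2,true),(0,true),(2,false)]
/-- the word of `c y^(±1) c⁻¹` -/
def Wd (b : Bool) : List (Fin 3 × Bool) := C4 ++ [(1,b)] ++ Ci4
/-- the prefix pattern `c y^(±1)` -/
def Pd (b : Bool) : List (Fin 3 × Bool) := C4 ++ [(1,b)]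

lemma head_ex {M : List (Fin 3 × Bool)} {v : Fin 3 × Bool} (h : M.head? = some v) :
    ∃ T, M = v :: T := List.head?_eq_some_iff.1 h

lemma main_step (b : Bool) (g : FreeGroup (Fin 3))
    (hg : ¬ (Pd (!b) <+: g.toWord)) :
    Pd b <+: (mk (Wd b) * g).toWord := by
  have pref : Pd b <+: Wd b := ⟨Ci4, rfl⟩
  by_cases c1 : g.toWord.head? = some ((2 : Fin 3), true)
  case neg =>
    have key := toWord_mul_eq (mk (Wd b)) g (Wd b) [] g.toWord rfl
      (by rw [mul_mk, List.append_nil]) (by cases b <;> simp [Wd, C4, Ci4, nc, List.Chain', List.isChain_cons_cons, List.isChain_singleton])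
      (junc (v := ((2 : Fin 3), false)) (by cases b <;> rfl) c1)
    rw [key]
    exact pref.trans (List.prefix_append _ _)
  obtain ⟨T1, hT1⟩ := head_ex c1
  by_cases c2 : T1.head? = some ((0 : Fin 3), false)
  case neg =>
    have key := toWord_mul_eq (mk (Wd b)) g
      [(2,true),(0,false),(2,false),(0,true),(1,b),(0,false),(2,true),(0,true)]
      [(2,true)] T1 (by rw [hT1]; rfl)
      (by cases b <;> decide) (by cases b <;> simp [nc, List.Chain', List.isChain_cons_cons, List.isChain_singleton])
      (junc (v := ((0 : Fin 3), true)) (by rfl) c2)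
    rw [key]
    refine List.IsPrefix.trans ?_ (List.prefix_append _ _)
    cases b <;> decide
  obtain ⟨T2, hT2⟩ := head_ex c2
  by_cases c3 : T2.head? = some ((2 : Fin 3), false)
  case neg =>
    have key := toWord_mul_eq (mk (Wd b)) g
      [(2,true),(0,false),(2,false),(0,true),(1,b),(0,false),(2,true)]
      [(2,true),(0,false)] T2 (by rw [hT1, hT2]; rfl)
      (by cases b <;> decide) (by cases b <;> simp [nc, List.Chain', List.isChain_cons_cons, List.isChain_singleton])
      (junc (v := ((2 : Fin 3), true)) (by rfl) c3)
    rw [key]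
    refine List.IsPrefix.trans ?_ (List.prefix_append _ _)
    cases b <;> decide
  obtain ⟨T3, hT3⟩ := head_ex c3
  by_cases c4 : T3.head? = some ((0 : Fin 3), true)
  case neg =>
    have key := toWord_mul_eq (mk (Wd b)) g
      [(2,true),(0,false),(2,false),(0,true),(1,b),(0,false)]
      [(2,true),(0,false),(2,false)] T3 (by rw [hT1, hT2, hT3]; rfl)
      (by cases b <;> decide) (by cases b <;> simp [nc, List.Chain', List.isChain_cons_cons, List.isChain_singleton])
      (junc (v := ((0 : Fin 3), false)) (by rfl) c4)
    rw [key]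
    refine List.IsPrefix.trans ?_ (List.prefix_append _ _)
    cases b <;> decide
  obtain ⟨T4, hT4⟩ := head_ex c4
  have c5 : T4.head? ≠ some ((1 : Fin 3), !b) := by
    intro hh
    obtain ⟨T5, hT5⟩ := head_ex hh
    exact hg ⟨T5, by rw [hT1, hT2, hT3, hT4, hT5]; rfl⟩
  have key := toWord_mul_eq (mk (Wd b)) g
    [(2,true),(0,false),(2,false),(0,true),(1,b)]
    [(2,true),(0,false),(2,false),(0,true)] T4 (by rw [hT1, hT2, hT3, hT4]; rfl)
    (by cases b <;> decide) (by cases b <;> simp [nc, List.Chain', List.isChain_cons_cons, List.isChain_singleton])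
    (junc (v := ((1 : Fin 3), b)) (by rfl) (by simpa using c5))
  rw [key]
  exact List.IsPrefix.trans ⟨[], by simp [Pd, C4]⟩ (List.prefix_append _ _)

lemma main_step0 (b : Bool) (g : FreeGroup (Fin 3))
    (hg : ¬ ([((1 : Fin 3), !b)] <+: g.toWord)) :
    [((1 : Fin 3), b)] <+: (mk [((1 : Fin 3), b)] * g).toWord := by
  have hM : g.toWord.head? ≠ some ((1 : Fin 3), !b) := by
    intro hh
    obtain ⟨T, hT⟩ := head_ex hh
    exact hg ⟨T, by rw [hT]; rfl⟩
  have key := toWord_mul_eq (mk [((1 : Fin 3), b)]) g [((1 : Fin 3), b)] [] g.toWord rfl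
    (by rw [mul_mk, List.append_nil]) (by simp [List.Chain'])
    (junc (v := ((1 : Fin 3), b)) (by rfl) hM)
  rw [key]
  exact List.prefix_append _ _


/-- the generator images -/
def a : Fin 2 → FreeGroup (Fin 3) := fun i => if i = 0 then mk [(1, true)] else mk (Wd false)

def Xs : Fin 2 → Set (FreeGroup (Fin 3)) := fun i =>
  if i = 0 then {g | [((1 : Fin 3), true)] <+: g.toWord} else {g | Pd false <+: g.toWord}

def Ys : Fin 2 → Set (FreeGroup (Fin 3)) := fun i =>
  if i = 0 then {g | [((1 : Fin 3), false)] <+: g.toWord} else {g | Pd true <+: g.toWord}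

lemma disj (P Q : List (Fin 3 × Bool)) (h1 : ¬ (P <+: Q)) (h2 : ¬ (Q <+: P)) :
    Disjoint {g : FreeGroup (Fin 3) | P <+: g.toWord} {g | Q <+: g.toWord} := by
  rw [Set.disjoint_left]
  intro g hP hQ
  rcases List.prefix_or_prefix_of_prefix hP hQ with h | h
  · exact h1 h
  · exact h2 h

lemma main : Function.Injective (FreeGroup.lift a) := by
  apply FreeGroup.injective_lift_of_ping_pong a Xs Ys
  · -- X nonempty
    intro i
    fin_cases i
    · exact ⟨mk [(1, true)], by show _ <+: (mk _).toWord; rw [toWord_mk]; decide⟩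
    · exact ⟨mk (Pd false), by show Pd false <+: (mk _).toWord; rw [toWord_mk]; decide⟩
  · -- X pairwise disjoint
    intro i j hij
    fin_cases i <;> fin_cases j <;> simp_all <;>
      [skip; skip] <;> first
      | exact disj _ _ (by decide) (by decide)
  · intro i j hij
    fin_cases i <;> fin_cases j <;> simp_all <;> first
      | exact disj _ _ (by decide) (by decide)
  · -- X vs Y disjoint
    intro i j
    fin_cases i <;> fin_cases j <;> exact disj _ _ (by decide) (by decide)
  · -- ping
    intro i
    rintro _ ⟨g, hg, rfl⟩
    show a i * g ∈ Xs i
    fin_cases i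
    · exact main_step0 true g (by simpa [Ys] using hg)
    · exact main_step false g (by simpa [Ys] using hg)
  · -- pong
    intro i
    rintro _ ⟨g, hg, rfl⟩
    show (a i)⁻¹ * g ∈ Ys i
    fin_cases i
    · show (a 0)⁻¹ * g ∈ Ys 0
      have : (a 0)⁻¹ = mk [((1 : Fin 3), false)] := by decide
      rw [this]
      exact main_step0 false g (by simpa [Xs] using hg)
    · show (a 1)⁻¹ * g ∈ Ys 1
      have : (a 1)⁻¹ = mk (Wd true) := by decide
      rw [this]
      exact main_step true g (by simpa [Xs] using hg)

end Claim32

/-- Claim 3.2: the homomorphism `F₂ → F₃` of free groups determined by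
`e₁ ↦ y` and `e₂ ↦ (z x⁻¹ z⁻¹) (x y⁻¹ x⁻¹) (z x z⁻¹)` is injective. -/
theorem claim_3_2 :
    let x : FreeGroup (Fin 3) := FreeGroup.of 0
    let y : FreeGroup (Fin 3) := FreeGroup.of 1
    let z : FreeGroup (Fin 3) := FreeGroup.of 2
    Function.Injective
      (FreeGroup.lift (fun i : Fin 2 =>
        if i = 0 then y
        else (z * x⁻¹ * z⁻¹) * (x * y⁻¹ * x⁻¹) * (z * x * z⁻¹))) := by
  intro x y z
  have h : (fun i : Fin 2 =>
      if i = 0 then y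
      else (z * x⁻¹ * z⁻¹) * (x * y⁻¹ * x⁻¹) * (z * x * z⁻¹)) = Claim32.a := by
    funext i
    fin_cases i
    · show y = Claim32.a 0
      decide
    · show (z * x⁻¹ * z⁻¹) * (x * y⁻¹ * x⁻¹) * (z * x * z⁻¹) = Claim32.a 1
      decide
  rw [h]
  exact Claim32.main
end

section
/- Let F₃ be the free group on three generators x, y, z. The homomorphism φ from the free group F₂ on two generators g₁, g₂ to F₃ determined by φ(g₁) = x y⁻¹ x⁻¹ z⁻¹ x y x⁻¹ z x⁻¹ z⁻¹ x y⁻¹ x⁻¹ z x y and φ(g₂) = z x⁻¹ z⁻¹ x y⁻¹ x⁻¹ z x z⁻¹ y is injective. -/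
open FreeGroup List

namespace Claim33

variable {α : Type*} [DecidableEq α]

/-- The "no cancellation between adjacent letters" relation. -/
def R : (α × Bool) → (α × Bool) → Prop := fun p q => ¬(p.1 = q.1 ∧ p.2 = !q.2)

instance : DecidableRel (R (α := α)) := fun _ _ => instDecidableNot

omit [DecidableEq α] in
lemma chain'_of_no_pair : ∀ (M : List (α × Bool)),
    (∀ (L₁ L₂ : List (α × Bool)) (x : α) (b : Bool),
      M ≠ L₁ ++ (x, b) :: (x, !b) :: L₂) → List.Chain' R M
  | [], _ => List.isChain_nil
  | [_], _ => List.isChain_singleton _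
  | p :: q :: t, h => by
    unfold List.Chain'
    rw [List.isChain_cons_cons]
    constructor
    · intro ⟨h1, h2⟩
      have hq : q = (p.1, !p.2) := Prod.ext h1.symm (by simp [h2])
      exact h [] t p.1 p.2 (by simp [hq])
    · exact chain'_of_no_pair (q :: t) fun L₁ L₂ x b hEq =>
        h (p :: L₁) L₂ x b (by rw [hEq, List.cons_append])

lemma chain'_toWord (w : FreeGroup α) : List.Chain' R w.toWord := by
  apply chain'_of_no_pair
  intro L₁ L₂ x b hEq
  exact FreeGroup.reduce.not (L₁ := w.toWord) (by rw [FreeGroup.reduce_toWord]; exact hEq)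

lemma reduce_eq_self_of_chain' : ∀ {L : List (α × Bool)}, List.Chain' R L →
    FreeGroup.reduce L = L
  | [], _ => rfl
  | x :: L, h => by
    have hL : FreeGroup.reduce L = L := reduce_eq_self_of_chain' h.tail
    rw [FreeGroup.reduce.cons, hL]
    cases L with
    | nil => rfl
    | cons hd tl =>
      unfold List.Chain' at h
      rw [List.isChain_cons_cons] at h
      simp only [if_neg h.1]

/-- Key cancellation lemma: multiplying `mk (A' ++ [u])` (a reduced word) by `w`
whose reduced word does not start with the two-letter prefix
`[(u.1, !u.2), (p.1, !p.2)]` (where `p` is the last letter of `A'`)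
yields a word starting with the first two letters of `A'`. -/
lemma key (A' : List (α × Bool)) (u p : α × Bool) (w : FreeGroup α)
    (hlast : A'.getLast? = some p)
    (hA : List.Chain' R (A' ++ [u]))
    (hlen : 2 ≤ A'.length)
    (hw : w.toWord.take 2 ≠ [(u.1, !u.2), (p.1, !p.2)]) :
    (FreeGroup.mk (A' ++ [u]) * w).toWord.take 2 = A'.take 2 := by
  obtain ⟨L, hL, hLw⟩ : ∃ L, w.toWord = L ∧ w = FreeGroup.mk L :=
    ⟨w.toWord, rfl, FreeGroup.mk_toWord.symm⟩
  rw [hL] at hw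
  have hchainL : List.Chain' R L := hL ▸ chain'_toWord w
  rw [hLw, FreeGroup.mul_mk]
  cases L with
  | nil =>
    rw [List.append_nil, FreeGroup.toWord_mk, reduce_eq_self_of_chain' hA]
    rw [List.take_append_of_le_length hlen]
  | cons c L' =>
    by_cases hc : c = (u.1, !u.2)
    · -- cancellation of `u` with `c`
      subst hc
      have hmk : FreeGroup.mk ((A' ++ [u]) ++ (u.1, !u.2) :: L') = FreeGroup.mk (A' ++ L') := by
        have : (A' ++ [u]) ++ (u.1, !u.2) :: L' = A' ++ (u.1, u.2) :: (u.1, !u.2) :: L' := by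
          simp
        rw [this]
        exact Quot.sound FreeGroup.Red.Step.not
      rw [hmk, FreeGroup.toWord_mk]
      have hchain : List.Chain' R (A' ++ L') := by
        unfold List.Chain'
        rw [List.isChain_append]
        refine ⟨(List.isChain_append.mp hA).1, hchainL.tail, ?_⟩
        intro x hx y hy
        rw [hlast, Option.mem_some_iff] at hx
        subst hx
        intro ⟨h1, h2⟩
        apply hw
        cases L' with
        | nil => exact (Option.not_mem_none y hy).elim
        | cons d t =>
          simp only [List.head?_cons, Option.mem_some_iff] at hy
          subst hy
          have hd : d = (p.1, !p.2) := Prod.ext h1.symm (by simp [h2])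
          simp [hd]
      rw [reduce_eq_self_of_chain' hchain, List.take_append_of_le_length hlen]
    · -- no cancellation
      have hchain : List.Chain' R ((A' ++ [u]) ++ c :: L') := by
        unfold List.Chain'
        rw [List.isChain_append]
        refine ⟨hA, hchainL, ?_⟩
        intro x hx y hy
        rw [List.getLast?_concat, Option.mem_some_iff] at hx
        rw [List.head?_cons, Option.mem_some_iff] at hy
        subst hx; subst hy
        intro ⟨h1, h2⟩
        exact hc (Prod.ext h1.symm (by simp [h2]))
      rw [FreeGroup.toWord_mk, reduce_eq_self_of_chain' hchain, List.append_assoc,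
        List.take_append_of_le_length hlen]

def wA' : List (Fin 3 × Bool) := [((0 : Fin 3), true), ((1 : Fin 3), false), ((0 : Fin 3), false), ((2 : Fin 3), false), ((0 : Fin 3), true), ((1 : Fin 3), true), ((0 : Fin 3), false), ((2 : Fin 3), true), ((0 : Fin 3), false), ((2 : Fin 3), false), ((0 : Fin 3), true), ((1 : Fin 3), false), ((0 : Fin 3), false), ((2 : Fin 3), true), ((0 : Fin 3), true)]
def wAu : Fin 3 × Bool := ((1 : Fin 3), true)
def wAp : Fin 3 × Bool := ((0 : Fin 3), true)
def wAi' : List (Fin 3 × Bool) := [((1 : Fin 3), false), ((0 : Fin 3), false), ((2 : Fin 3), false), ((0 : Fin 3), true), ((1 : Fin 3), true), ((0 : Fin 3), false), ((2 : Fin 3), true), ((0 : Fin 3), true), ((2 : Fin 3), false), ((0 : Fin 3), true), ((1 : Fin 3), false), ((0 : Fin 3), false), ((2 : Fin 3), true), ((0 : Fin 3), true), ((1 : Fin 3), true)]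
def wAiu : Fin 3 × Bool := ((0 : Fin 3), false)
def wAip : Fin 3 × Bool := ((1 : Fin 3), true)
def wB' : List (Fin 3 × Bool) := [((2 : Fin 3), true), ((0 : Fin 3), false), ((2 : Fin 3), false), ((0 : Fin 3), true), ((1 : Fin 3), false), ((0 : Fin 3), false), ((2 : Fin 3), true), ((0 : Fin 3), true), ((2 : Fin 3), false)]
def wBu : Fin 3 × Bool := ((1 : Fin 3), true)
def wBp : Fin 3 × Bool := ((2 : Fin 3), false)
def wBi' : List (Fin 3 × Bool) := [((1 : Fin 3), false), ((2 : Fin 3), true), ((0 : Fin 3), false), ((2 : Fin 3), false), ((0 : Fin 3), true), ((1 : Fin 3), true), ((0 : Fin 3), false), ((2 : Fin 3), true), ((0 : Fin 3), true)]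
def wBiu : Fin 3 × Bool := ((2 : Fin 3), false)
def wBip : Fin 3 × Bool := ((0 : Fin 3), true)

/-- Boolean check for `Chain' R`. -/
def chainB : List (α × Bool) → Bool
  | [] => true
  | [_] => true
  | p :: q :: t => (!(p.1 = q.1 ∧ p.2 = !q.2 : Bool)) && chainB (q :: t)

lemma chain'_of_chainB : ∀ {L : List (α × Bool)}, chainB L = true → List.Chain' R L
  | [], _ => List.isChain_nil
  | [_], _ => List.isChain_singleton _
  | p :: q :: t, h => by
    rw [chainB, Bool.and_eq_true] at h
    unfold List.Chain'
    rw [List.isChain_cons_cons]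
    refine ⟨?_, chain'_of_chainB h.2⟩
    intro hc
    have := h.1
    simp only [Bool.not_eq_true', decide_eq_false_iff_not] at this
    exact this ⟨hc.1, hc.2⟩

def pref : Fin 2 → Bool → List (Fin 3 × Bool)
  | 0, true => [((0 : Fin 3), true), ((1 : Fin 3), false)]
  | 0, false => [((1 : Fin 3), false), ((0 : Fin 3), false)]
  | 1, true => [((2 : Fin 3), true), ((0 : Fin 3), false)]
  | 1, false => [((1 : Fin 3), false), ((2 : Fin 3), true)]

end Claim33

open Claim33 Pointwise in
/-- Claim 3.3: the homomorphism `F₂ → F₃` of free groups determined by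
`g₁ ↦ x y⁻¹ x⁻¹ z⁻¹ x y x⁻¹ z x⁻¹ z⁻¹ x y⁻¹ x⁻¹ z x y` and
`g₂ ↦ z x⁻¹ z⁻¹ x y⁻¹ x⁻¹ z x z⁻¹ y` is injective. -/
theorem claim_3_3 :
    let x : FreeGroup (Fin 3) := FreeGroup.of 0
    let y : FreeGroup (Fin 3) := FreeGroup.of 1
    let z : FreeGroup (Fin 3) := FreeGroup.of 2
    Function.Injective
      (FreeGroup.lift (fun i : Fin 2 =>
        if i = 0 then
          x * y⁻¹ * x⁻¹ * z⁻¹ * x * y * x⁻¹ * z * x⁻¹ * z⁻¹ * x * y⁻¹ * x⁻¹ * z * x * y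
        else z * x⁻¹ * z⁻¹ * x * y⁻¹ * x⁻¹ * z * x * z⁻¹ * y)) := by
  intro x y z
  set a : Fin 2 → FreeGroup (Fin 3) := fun i : Fin 2 =>
    if i = 0 then
      x * y⁻¹ * x⁻¹ * z⁻¹ * x * y * x⁻¹ * z * x⁻¹ * z⁻¹ * x * y⁻¹ * x⁻¹ * z * x * y
    else z * x⁻¹ * z⁻¹ * x * y⁻¹ * x⁻¹ * z * x * z⁻¹ * y with ha
  have ha0 : a 0 = FreeGroup.mk (wA' ++ [wAu]) := by decide
  have ha0i : (a 0)⁻¹ = FreeGroup.mk (wAi' ++ [wAiu]) := by decide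
  have ha1 : a 1 = FreeGroup.mk (wB' ++ [wBu]) := by decide
  have ha1i : (a 1)⁻¹ = FreeGroup.mk (wBi' ++ [wBiu]) := by decide
  apply FreeGroup.injective_lift_of_ping_pong a
    (fun i => {w : FreeGroup (Fin 3) | w.toWord.take 2 = pref i true})
    (fun i => {w : FreeGroup (Fin 3) | w.toWord.take 2 = pref i false})
  · -- nonempty
    intro i
    refine ⟨FreeGroup.mk (pref i true), ?_⟩
    show (FreeGroup.mk (pref i true)).toWord.take 2 = pref i true
    rw [FreeGroup.toWord_mk]
    fin_cases i <;> decide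
  · -- X pairwise disjoint
    intro i j hij
    fin_cases i <;> fin_cases j <;> simp_all <;>
      exact Set.disjoint_left.mpr fun w hw hw' => by
        rw [Set.mem_setOf_eq] at hw hw'; rw [hw] at hw'; exact absurd hw' (by decide)
  · -- Y pairwise disjoint
    intro i j hij
    fin_cases i <;> fin_cases j <;> simp_all <;>
      exact Set.disjoint_left.mpr fun w hw hw' => by
        rw [Set.mem_setOf_eq] at hw hw'; rw [hw] at hw'; exact absurd hw' (by decide)
  · -- X Y disjoint
    intro i j
    fin_cases i <;> fin_cases j <;>
      exact Set.disjoint_left.mpr fun w hw hw' => by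
        rw [Set.mem_setOf_eq] at hw hw'; rw [hw] at hw'; exact absurd hw' (by decide)
  · -- hX
    intro i v hv
    rw [Set.mem_smul_set] at hv
    obtain ⟨w, hw, rfl⟩ := hv
    rw [smul_eq_mul]
    show (a i * w).toWord.take 2 = pref i true
    fin_cases i
    · show List.take 2 (a 0 * w).toWord = pref 0 true
      rw [ha0]
      have := key wA' wAu wAp w (by decide) (chain'_of_chainB (by decide)) (by decide)
        (fun h => hw (show _ from h))
      exact this.trans (by decide)
    · show List.take 2 (a 1 * w).toWord = pref 1 true
      rw [ha1]
      have := key wB' wBu wBp w (by decide) (chain'_of_chainB (by decide)) (by decide)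
        (fun h => hw (show _ from h))
      exact this.trans (by decide)
  · -- hY
    intro i v hv
    rw [Pi.inv_apply, Set.mem_smul_set] at hv
    obtain ⟨w, hw, rfl⟩ := hv
    rw [smul_eq_mul]
    show ((a i)⁻¹ * w).toWord.take 2 = pref i false
    fin_cases i
    · show List.take 2 ((a 0)⁻¹ * w).toWord = pref 0 false
      rw [ha0i]
      have := key wAi' wAiu wAip w (by decide) (chain'_of_chainB (by decide)) (by decide)
        (fun h => hw (show _ from h))
      exact this.trans (by decide)
    · show List.take 2 ((a 1)⁻¹ * w).toWord = pref 1 false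
      rw [ha1i]
      have := key wBi' wBiu wBip w (by decide) (chain'_of_chainB (by decide)) (by decide)
        (fun h => hw (show _ from h))
      exact this.trans (by decide)
end

section
/- Let F₃ be the free group on three generators x, y, z. The homomorphism φ from the free group on three generators e₁, e₂, e₃ to F₃ determined by φ(e₁) = y, φ(e₂) = x y⁻¹ x⁻¹ z⁻¹ x y x⁻¹ z x⁻¹ z⁻¹ x y⁻¹ x⁻¹ z x y, and φ(e₃) = z x⁻¹ z⁻¹ x is injective. -/
open FreeGroup Pointwise

namespace Claim34

abbrev Lam := Fin 3 × Bool

def Xp : Lam := (0, true)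
def Xm : Lam := (0, false)
def Yp : Lam := (1, true)
def Ym : Lam := (1, false)
def Zp : Lam := (2, true)
def Zm : Lam := (2, false)

/-- A word is reduced: no adjacent cancelling pair. -/
abbrev Rd (L : List Lam) : Prop := L.Chain' fun a b => ¬(a.1 = b.1 ∧ a.2 = !b.2)

def rdb : List Lam → Bool
  | [] => true
  | [_] => true
  | a :: b :: t => !(a.1 == b.1 && a.2 == !b.2) && rdb (b :: t)

lemma rd_dec : ∀ {L : List Lam}, rdb L = true → Rd L
  | [], _ => List.isChain_nil
  | [a], _ => List.isChain_singleton _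
  | a :: b :: t, h => by
    rw [rdb, Bool.and_eq_true] at h
    refine List.isChain_cons_cons.mpr ⟨?_, rd_dec h.2⟩
    intro hc
    have := h.1
    rw [hc.1, hc.2] at this
    simp at this

lemma rd_reduce (L : List Lam) : Rd (reduce L) := by
  induction L with
  | nil => exact List.isChain_nil
  | cons a L ih =>
    rw [reduce.cons]
    rcases h : reduce L with _ | ⟨b, t⟩
    · exact List.isChain_singleton _
    · rw [h] at ih
      by_cases hc : a.1 = b.1 ∧ a.2 = !b.2
      · show Rd (if a.1 = b.1 ∧ a.2 = !b.2 then t else a :: b :: t)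
        rw [if_pos hc]
        exact ih.tail
      · show Rd (if a.1 = b.1 ∧ a.2 = !b.2 then t else a :: b :: t)
        rw [if_neg hc]
        exact List.isChain_cons_cons.mpr ⟨hc, ih⟩

lemma reduce_eq_self {L : List Lam} (h : Rd L) : reduce L = L := by
  induction L with
  | nil => rfl
  | cons a L ih =>
    have hL : reduce L = L := ih h.tail
    rw [reduce.cons, hL]
    rcases L with _ | ⟨b, t⟩
    · rfl
    · show (if a.1 = b.1 ∧ a.2 = !b.2 then t else a :: b :: t) = a :: b :: t
      rw [if_neg (List.isChain_cons_cons.mp h).1]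

lemma rd_toWord (w : FreeGroup (Fin 3)) : Rd w.toWord := by
  rw [← reduce_toWord]; exact rd_reduce _

lemma toWord_mk_rd {L : List Lam} (h : Rd L) : (FreeGroup.mk L).toWord = L := by
  rw [toWord_mk, reduce_eq_self h]

lemma singleton_prefix {v : Lam} {l : List Lam} : [v] <+: l ↔ l.head? = some v := by
  cases l with
  | nil => simp
  | cons a t => simp [List.cons_prefix_cons, eq_comm]

lemma pc : ∀ (l p q : List Lam), p <+: l → q <+: l → p <+: q ∨ q <+: p := by
  intro l
  induction l with
  | nil =>
    intro p q hp hq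
    rw [List.prefix_nil] at hp hq
    subst hp; subst hq; simp
  | cons a l ih =>
    intro p q hp hq
    rcases p with _ | ⟨x, p⟩
    · left; exact List.nil_prefix
    rcases q with _ | ⟨y, q⟩
    · right; exact List.nil_prefix
    rw [List.cons_prefix_cons] at hp hq
    obtain ⟨rfl, hp⟩ := hp
    obtain ⟨rfl, hq⟩ := hq
    rcases ih p q hp hq with h | h
    · left; exact List.cons_prefix_cons.mpr ⟨rfl, h⟩
    · right; exact List.cons_prefix_cons.mpr ⟨rfl, h⟩

/-- Prefix sets. -/
abbrev P (p : List Lam) : Set (FreeGroup (Fin 3)) := {w | p <+: w.toWord}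

lemma Pdisj {p q : List Lam} (h1 : ¬ p <+: q) (h2 : ¬ q <+: p) : Disjoint (P p) (P q) :=
  Set.disjoint_left.mpr fun _ hp hq => (pc _ p q hp hq).elim h1 h2

/-- The images of the three generators, as reduced words. -/
def WA : List Lam := [Yp]
def WB : List Lam := [Xp,Ym,Xm,Zm,Xp,Yp,Xm,Zp,Xm,Zm,Xp,Ym,Xm,Zp,Xp,Yp]
def WC : List Lam := [Zp,Xm,Zm,Xp]
def WAi : List Lam := [Ym]
def WBi : List Lam := [Ym,Xm,Zm,Xp,Yp,Xm,Zp,Xp,Zm,Xp,Ym,Xm,Zp,Xp,Yp,Xm]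
def WCi : List Lam := [Xm,Zp,Xp,Zm]

/-- truncations -/
def B2 : List Lam := [Xp,Ym,Xm,Zm,Xp,Yp,Xm,Zp,Xm,Zm,Xp,Ym,Xm,Zp,Xp]
def B3 : List Lam := [Xp,Ym,Xm,Zm,Xp,Yp,Xm,Zp,Xm,Zm,Xp,Ym,Xm,Zp]
def Bi2 : List Lam := [Ym,Xm,Zm,Xp,Yp,Xm,Zp,Xp,Zm,Xp,Ym,Xm,Zp,Xp,Yp]
def C2 : List Lam := [Zp,Xm,Zm]
def C3 : List Lam := [Zp,Xm]
def Ci2 : List Lam := [Xm,Zp,Xp]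

/-- Main computation: if `g * mk p = mk u` with `u` reduced ending in `U`, and the reduced
word of `w` is `p ++ t` with `t` not starting with the inverse of `U`, then the reduced word
of `g * w` is `u ++ t`. -/
lemma push (g w : FreeGroup (Fin 3)) (p t u : List Lam) (U : Lam)
    (hw : w.toWord = p ++ t)
    (hgp : g * FreeGroup.mk p = FreeGroup.mk u)
    (hu : Rd u) (hU : u.getLast? = some U)
    (ht : t.head? ≠ some (U.1, !U.2)) :
    (g * w).toWord = u ++ t := by
  have hrd : Rd (p ++ t) := by rw [← hw]; exact rd_toWord w
  have hrt : Rd t := (List.isChain_append.mp hrd).2.1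
  have hw' : w = FreeGroup.mk p * FreeGroup.mk t := by
    rw [FreeGroup.mul_mk, ← hw, FreeGroup.mk_toWord]
  rw [hw', ← mul_assoc, hgp, FreeGroup.mul_mk]
  apply toWord_mk_rd
  refine List.isChain_append.mpr ⟨hu, hrt, ?_⟩
  intro a ha b hb hc
  rw [hU, Option.mem_some_iff] at ha
  subst ha
  apply ht
  have hb' : t.head? = some b := hb
  rw [hb']
  congr 1
  exact Prod.ext hc.1.symm (by rw [hc.2, Bool.not_not])

lemma push0 (g w : FreeGroup (Fin 3)) (u : List Lam) (U : Lam)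
    (hg : g = FreeGroup.mk u) (hu : Rd u) (hU : u.getLast? = some U)
    (ht : w.toWord.head? ≠ some (U.1, !U.2)) :
    (g * w).toWord = u ++ w.toWord :=
  push g w [] w.toWord u U rfl
    (by rw [← FreeGroup.one_eq_mk, mul_one, hg]) hu hU ht

/- The six ping-pong conditions. -/

lemma stepA (w : FreeGroup (Fin 3))
    (h : ¬ [Ym] <+: w.toWord ∨ [Ym,Xm,Zm] <+: w.toWord) :
    FreeGroup.mk WA * w ∈ P [Yp] ∪ P [Xm,Zm] := by
  rcases h with h | h
  · left
    have := push0 (FreeGroup.mk WA) w WA Yp rfl (rd_dec (by decide)) (by decide)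
      (fun hh => h (singleton_prefix.mpr hh))
    show [Yp] <+: _
    rw [this]
    exact List.prefix_append _ _
  · right
    obtain ⟨t, ht⟩ := h
    have hz : t.head? ≠ some Zp := by
      have hrd := rd_toWord w
      rw [← ht] at hrd
      have h3 := (hrd.tail).tail
      intro hh
      obtain ⟨r, rfl⟩ : ∃ r, t = Zp :: r := by
        cases t with
        | nil => simp at hh
        | cons a r =>
          simp only [List.head?_cons, Option.some.injEq] at hh
          exact ⟨r, by rw [hh]⟩
      exact (List.isChain_cons_cons.mp h3).1 ⟨rfl, rfl⟩
    have := push (FreeGroup.mk WA) w [Ym,Xm,Zm] t [Xm,Zm] Zm ht.symm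
      (by rw [FreeGroup.mul_mk]; exact FreeGroup.reduce.exact (by decide))
      (rd_dec (by decide)) (by decide) hz
    show [Xm,Zm] <+: _
    rw [this]
    exact List.prefix_append _ _

lemma stepAi (w : FreeGroup (Fin 3))
    (h1 : ¬ [Yp] <+: w.toWord) (h2 : ¬ [Xm,Zm] <+: w.toWord) :
    FreeGroup.mk WAi * w ∈ P [Ym] \ P [Ym,Xm,Zm] := by
  have key := push0 (FreeGroup.mk WAi) w WAi Ym rfl (rd_dec (by decide)) (by decide)
    (fun hh => h1 (singleton_prefix.mpr hh))
  constructor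
  · show [Ym] <+: _
    rw [key]
    exact List.prefix_append _ _
  · show ¬ [Ym,Xm,Zm] <+: _
    rw [key]
    intro hh
    exact h2 (List.cons_prefix_cons.mp hh).2

lemma stepB (w : FreeGroup (Fin 3)) (h : ¬ [Ym,Xm,Zm] <+: w.toWord) :
    FreeGroup.mk WB * w ∈ P [Xp,Ym] := by
  by_cases h1 : [Ym] <+: w.toWord
  · obtain ⟨t1, ht1⟩ := h1
    by_cases h2 : [Xm] <+: t1
    · obtain ⟨t2, ht2⟩ := h2
      have hwt : w.toWord = [Ym, Xm] ++ t2 := by rw [← ht1, ← ht2]; rfl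
      have hz : t2.head? ≠ some Zm := by
        intro hh
        exact h (by
          rw [hwt]
          exact List.cons_prefix_cons.mpr ⟨rfl,
            List.cons_prefix_cons.mpr ⟨rfl, singleton_prefix.mpr hh⟩⟩)
      have := push (FreeGroup.mk WB) w [Ym,Xm] t2 B3 Zp hwt
        (by rw [FreeGroup.mul_mk]; exact FreeGroup.reduce.exact (by decide))
        (rd_dec (by decide)) (by decide) hz
      show [Xp,Ym] <+: _
      rw [this]
      exact (show [Xp,Ym] <+: B3 by decide).trans (List.prefix_append _ _)
    · have hx : t1.head? ≠ some Xm := fun hh => h2 (singleton_prefix.mpr hh)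
      have := push (FreeGroup.mk WB) w [Ym] t1 B2 Xp ht1.symm
        (by rw [FreeGroup.mul_mk]; exact FreeGroup.reduce.exact (by decide))
        (rd_dec (by decide)) (by decide) hx
      show [Xp,Ym] <+: _
      rw [this]
      exact (show [Xp,Ym] <+: B2 by decide).trans (List.prefix_append _ _)
  · have := push0 (FreeGroup.mk WB) w WB Yp rfl (rd_dec (by decide)) (by decide)
      (fun hh => h1 (singleton_prefix.mpr hh))
    show [Xp,Ym] <+: _
    rw [this]
    exact (show [Xp,Ym] <+: WB by decide).trans (List.prefix_append _ _)

lemma stepBi (w : FreeGroup (Fin 3)) (h : ¬ [Xp,Ym] <+: w.toWord) :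
    FreeGroup.mk WBi * w ∈ P [Ym,Xm,Zm] := by
  by_cases h1 : [Xp] <+: w.toWord
  · obtain ⟨t1, ht1⟩ := h1
    have hy : t1.head? ≠ some Ym := by
      intro hh
      exact h (by
        rw [← ht1]
        exact List.cons_prefix_cons.mpr ⟨rfl, singleton_prefix.mpr hh⟩)
    have := push (FreeGroup.mk WBi) w [Xp] t1 Bi2 Yp ht1.symm
      (by rw [FreeGroup.mul_mk]; exact FreeGroup.reduce.exact (by decide))
      (rd_dec (by decide)) (by decide) hy
    show [Ym,Xm,Zm] <+: _
    rw [this]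
    exact (show [Ym,Xm,Zm] <+: Bi2 by decide).trans (List.prefix_append _ _)
  · have := push0 (FreeGroup.mk WBi) w WBi Xm rfl (rd_dec (by decide)) (by decide)
      (fun hh => h1 (singleton_prefix.mpr hh))
    show [Ym,Xm,Zm] <+: _
    rw [this]
    exact (show [Ym,Xm,Zm] <+: WBi by decide).trans (List.prefix_append _ _)

lemma stepC (w : FreeGroup (Fin 3)) (h : ¬ [Xm,Zp,Xp] <+: w.toWord) :
    FreeGroup.mk WC * w ∈ P [Zp,Xm] := by
  by_cases h1 : [Xm] <+: w.toWord
  · obtain ⟨t1, ht1⟩ := h1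
    by_cases h2 : [Zp] <+: t1
    · obtain ⟨t2, ht2⟩ := h2
      have hwt : w.toWord = [Xm, Zp] ++ t2 := by rw [← ht1, ← ht2]; rfl
      have hx : t2.head? ≠ some Xp := by
        intro hh
        exact h (by
          rw [hwt]
          exact List.cons_prefix_cons.mpr ⟨rfl,
            List.cons_prefix_cons.mpr ⟨rfl, singleton_prefix.mpr hh⟩⟩)
      have := push (FreeGroup.mk WC) w [Xm,Zp] t2 C3 Xm hwt
        (by rw [FreeGroup.mul_mk]; exact FreeGroup.reduce.exact (by decide))
        (rd_dec (by decide)) (by decide) hx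
      show [Zp,Xm] <+: _
      rw [this]
      exact (show [Zp,Xm] <+: C3 by decide).trans (List.prefix_append _ _)
    · have hz : t1.head? ≠ some Zp := fun hh => h2 (singleton_prefix.mpr hh)
      have := push (FreeGroup.mk WC) w [Xm] t1 C2 Zm ht1.symm
        (by rw [FreeGroup.mul_mk]; exact FreeGroup.reduce.exact (by decide))
        (rd_dec (by decide)) (by decide) hz
      show [Zp,Xm] <+: _
      rw [this]
      exact (show [Zp,Xm] <+: C2 by decide).trans (List.prefix_append _ _)
  · have := push0 (FreeGroup.mk WC) w WC Xp rfl (rd_dec (by decide)) (by decide)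
      (fun hh => h1 (singleton_prefix.mpr hh))
    show [Zp,Xm] <+: _
    rw [this]
    exact (show [Zp,Xm] <+: WC by decide).trans (List.prefix_append _ _)

lemma stepCi (w : FreeGroup (Fin 3)) (h : ¬ [Zp,Xm] <+: w.toWord) :
    FreeGroup.mk WCi * w ∈ P [Xm,Zp,Xp] := by
  by_cases h1 : [Zp] <+: w.toWord
  · obtain ⟨t1, ht1⟩ := h1
    have hx : t1.head? ≠ some Xm := by
      intro hh
      exact h (by
        rw [← ht1]
        exact List.cons_prefix_cons.mpr ⟨rfl, singleton_prefix.mpr hh⟩)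
    have := push (FreeGroup.mk WCi) w [Zp] t1 Ci2 Xp ht1.symm
      (by rw [FreeGroup.mul_mk]; exact FreeGroup.reduce.exact (by decide))
      (rd_dec (by decide)) (by decide) hx
    show [Xm,Zp,Xp] <+: _
    rw [this]
    exact (show [Xm,Zp,Xp] <+: Ci2 by decide).trans (List.prefix_append _ _)
  · have := push0 (FreeGroup.mk WCi) w WCi Zm rfl (rd_dec (by decide)) (by decide)
      (fun hh => h1 (singleton_prefix.mpr hh))
    show [Xm,Zp,Xp] <+: _
    rw [this]
    exact (show [Xm,Zp,Xp] <+: WCi by decide).trans (List.prefix_append _ _)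

/-- The generator images. -/
def gs : Fin 3 → FreeGroup (Fin 3) := ![FreeGroup.mk WA, FreeGroup.mk WB, FreeGroup.mk WC]

/-- Ping-pong sets. -/
def XS : Fin 3 → Set (FreeGroup (Fin 3)) := ![P [Yp] ∪ P [Xm,Zm], P [Xp,Ym], P [Zp,Xm]]
def YS : Fin 3 → Set (FreeGroup (Fin 3)) :=
  ![P [Ym] \ P [Ym,Xm,Zm], P [Ym,Xm,Zm], P [Xm,Zp,Xp]]

lemma main : Function.Injective (FreeGroup.lift gs) := by
  apply FreeGroup.injective_lift_of_ping_pong gs XS YS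
  · -- nonempty
    intro i
    fin_cases i
    · exact ⟨FreeGroup.mk [Yp], Or.inl (show [Yp] <+: _ by
        rw [toWord_mk_rd (rd_dec (by decide))])⟩
    · exact ⟨FreeGroup.mk [Xp,Ym], show [Xp,Ym] <+: _ by
        rw [toWord_mk_rd (rd_dec (by decide))]⟩
    · exact ⟨FreeGroup.mk [Zp,Xm], show [Zp,Xm] <+: _ by
        rw [toWord_mk_rd (rd_dec (by decide))]⟩
  · -- X pairwise disjoint
    intro i j hij
    fin_cases i <;> fin_cases j
    · exact absurd rfl hij
    · exact Set.disjoint_union_left.mpr ⟨Pdisj (by decide) (by decide),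
        Pdisj (by decide) (by decide)⟩
    · exact Set.disjoint_union_left.mpr ⟨Pdisj (by decide) (by decide),
        Pdisj (by decide) (by decide)⟩
    · exact Set.disjoint_union_right.mpr ⟨Pdisj (by decide) (by decide),
        Pdisj (by decide) (by decide)⟩
    · exact absurd rfl hij
    · exact Pdisj (by decide) (by decide)
    · exact Set.disjoint_union_right.mpr ⟨Pdisj (by decide) (by decide),
        Pdisj (by decide) (by decide)⟩
    · exact Pdisj (by decide) (by decide)
    · exact absurd rfl hij
  · -- Y pairwise disjoint
    intro i j hij
    fin_cases i <;> fin_cases j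
    · exact absurd rfl hij
    · exact Set.disjoint_sdiff_left
    · exact (Pdisj (by decide) (by decide)).mono_left Set.diff_subset
    · exact Set.disjoint_sdiff_right
    · exact absurd rfl hij
    · exact Pdisj (by decide) (by decide)
    · exact (Pdisj (by decide) (by decide)).mono_right Set.diff_subset
    · exact Pdisj (by decide) (by decide)
    · exact absurd rfl hij
  · -- X i disjoint Y j
    intro i j
    fin_cases i <;> fin_cases j
    · exact Set.disjoint_union_left.mpr
        ⟨(Pdisj (by decide) (by decide)).mono_right Set.diff_subset,
         (Pdisj (by decide) (by decide)).mono_right Set.diff_subset⟩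
    · exact Set.disjoint_union_left.mpr ⟨Pdisj (by decide) (by decide),
        Pdisj (by decide) (by decide)⟩
    · exact Set.disjoint_union_left.mpr ⟨Pdisj (by decide) (by decide),
        Pdisj (by decide) (by decide)⟩
    · exact (Pdisj (by decide) (by decide)).mono_right Set.diff_subset
    · exact Pdisj (by decide) (by decide)
    · exact Pdisj (by decide) (by decide)
    · exact (Pdisj (by decide) (by decide)).mono_right Set.diff_subset
    · exact Pdisj (by decide) (by decide)
    · exact Pdisj (by decide) (by decide)
  · -- hX
    intro i
    fin_cases i
    · intro v hv
      obtain ⟨w, hw, rfl⟩ := Set.mem_smul_set.mp hv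
      rw [smul_eq_mul]
      refine stepA w ?_
      by_cases hm : [Ym,Xm,Zm] <+: w.toWord
      · exact Or.inr hm
      · exact Or.inl fun hy => hw ⟨hy, hm⟩
    · intro v hv
      obtain ⟨w, hw, rfl⟩ := Set.mem_smul_set.mp hv
      rw [smul_eq_mul]
      exact stepB w hw
    · intro v hv
      obtain ⟨w, hw, rfl⟩ := Set.mem_smul_set.mp hv
      rw [smul_eq_mul]
      exact stepC w hw
  · -- hY
    intro i
    fin_cases i
    · have e : gs⁻¹ (0 : Fin 3) = FreeGroup.mk WAi := by
        rw [Pi.inv_apply]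
        show (FreeGroup.mk WA)⁻¹ = _
        rw [FreeGroup.inv_mk]
        exact congrArg FreeGroup.mk (by decide)
      rw [show ((⟨0, by omega⟩ : Fin 3)) = (0 : Fin 3) from rfl, e]
      intro v hv
      obtain ⟨w, hw, rfl⟩ := Set.mem_smul_set.mp hv
      rw [smul_eq_mul]
      exact stepAi w (fun hy => hw (Or.inl hy)) (fun hy => hw (Or.inr hy))
    · have e : gs⁻¹ (1 : Fin 3) = FreeGroup.mk WBi := by
        rw [Pi.inv_apply]
        show (FreeGroup.mk WB)⁻¹ = _
        rw [FreeGroup.inv_mk]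
        exact congrArg FreeGroup.mk (by decide)
      rw [show ((⟨1, by omega⟩ : Fin 3)) = (1 : Fin 3) from rfl, e]
      intro v hv
      obtain ⟨w, hw, rfl⟩ := Set.mem_smul_set.mp hv
      rw [smul_eq_mul]
      exact stepBi w hw
    · have e : gs⁻¹ (2 : Fin 3) = FreeGroup.mk WCi := by
        rw [Pi.inv_apply]
        show (FreeGroup.mk WC)⁻¹ = _
        rw [FreeGroup.inv_mk]
        exact congrArg FreeGroup.mk (by decide)
      rw [show ((⟨2, by omega⟩ : Fin 3)) = (2 : Fin 3) from rfl, e]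
      intro v hv
      obtain ⟨w, hw, rfl⟩ := Set.mem_smul_set.mp hv
      rw [smul_eq_mul]
      exact stepCi w hw

end Claim34

/-- Claim 3.4: the homomorphism `F₃ → F₃` of free groups determined by
`e₁ ↦ y`, `e₂ ↦ x y⁻¹ x⁻¹ z⁻¹ x y x⁻¹ z x⁻¹ z⁻¹ x y⁻¹ x⁻¹ z x y`, `e₃ ↦ z x⁻¹ z⁻¹ x`
is injective. -/
theorem claim_3_4 :
    let x : FreeGroup (Fin 3) := FreeGroup.of 0
    let y : FreeGroup (Fin 3) := FreeGroup.of 1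
    let z : FreeGroup (Fin 3) := FreeGroup.of 2
    Function.Injective
      (FreeGroup.lift (fun i : Fin 3 =>
        if i = 0 then y
        else if i = 1 then
          x * y⁻¹ * x⁻¹ * z⁻¹ * x * y * x⁻¹ * z * x⁻¹ * z⁻¹ * x * y⁻¹ * x⁻¹ * z * x * y
        else z * x⁻¹ * z⁻¹ * x)) := by
  intro x y z
  have h : (fun i : Fin 3 =>
      if i = 0 then y
      else if i = 1 then
        x * y⁻¹ * x⁻¹ * z⁻¹ * x * y * x⁻¹ * z * x⁻¹ * z⁻¹ * x * y⁻¹ * x⁻¹ * z * x * y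
      else z * x⁻¹ * z⁻¹ * x) = Claim34.gs := by
    funext i
    fin_cases i <;> rfl
  rw [h]
  exact Claim34.main
end

section
/- Let F₃ be the free group on three generators x, y, z. The homomorphism φ from the free group F₄ on four generators g₁, g₂, g₃, g₄ to F₃ determined by φ(g₁) = x, φ(g₂) = x y⁻¹ x⁻¹ z⁻¹ x y x⁻¹ z x⁻¹ z⁻¹ x y⁻¹ x⁻¹ z x y x⁻¹, φ(g₃) = y, and φ(g₄) = z x⁻¹ z⁻¹ x y⁻¹ x⁻¹ z x z⁻¹ is injective. -/
namespace Claim35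

open FreeGroup Pointwise

/-- Letters of `F₃`. -/
abbrev Ltr := Fin 3 × Bool

/-- Non-cancellation relation between consecutive letters of a reduced word. -/
def R (u v : Ltr) : Prop := ¬(u.1 = v.1 ∧ u.2 = !v.2)

instance : DecidableRel R := fun u v => by unfold R; infer_instance

/-- A word satisfying the chain condition is its own reduction. -/
lemma reduce_eq_self : ∀ {L : List Ltr}, L.Chain' R → FreeGroup.reduce L = L
  | [], _ => rfl
  | [a], _ => rfl
  | a :: b :: L, h => by
    have hab : R a b := (List.isChain_cons_cons.mp h).1
    have ih := reduce_eq_self (L := b :: L) (List.isChain_cons_cons.mp h).2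
    rw [FreeGroup.reduce.cons, ih]
    simp only [R] at hab
    simp [hab]

/-- The reduction of any word satisfies the chain condition. -/
lemma chain'_reduce : ∀ (L : List Ltr), (FreeGroup.reduce L).Chain' R
  | [] => by simp [List.Chain']
  | a :: L => by
    have ih := chain'_reduce L
    rw [FreeGroup.reduce.cons]
    rcases h : FreeGroup.reduce L with _ | ⟨b, M⟩
    · simp [List.Chain']
    · rw [h] at ih
      by_cases hc : a.1 = b.1 ∧ a.2 = !b.2
      · simp only [hc, and_self, if_true]
        exact ih.tail
      · simp only [hc, if_false]
        exact List.isChain_cons_cons.mpr ⟨hc, ih⟩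

lemma chain'_toWord (w : FreeGroup (Fin 3)) : w.toWord.Chain' R := by
  rw [← FreeGroup.reduce_toWord]
  exact chain'_reduce _

/-- Main cancellation lemma: if `L` does not start with the first `q` letters of
`invRev B`, then the first `p` letters of `B` survive in `reduce (B ++ L)`,
provided `p + q ≤ |B| + 1`. -/
lemma main : ∀ (q : ℕ) (B L : List Ltr) (p : ℕ), B.Chain' R → L.Chain' R →
    p + q ≤ B.length + 1 → ¬((FreeGroup.invRev B).take q <+: L) →
    B.take p <+: FreeGroup.reduce (B ++ L)
  | 0, B, L, p, _, _, _, hQ => absurd (by simp) hQ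
  | q + 1, B, L, p, hB, hL, hpq, hQ => by
    rcases List.eq_nil_or_concat' B with rfl | ⟨B', bb, rfl⟩
    · -- B = []
      have hp : p = 0 := by simp at hpq; omega
      subst hp
      simp
    · have hinv : FreeGroup.invRev (B' ++ [bb]) = (bb.1, !bb.2) :: FreeGroup.invRev B' := by
        simp [FreeGroup.invRev]
      rcases hLc : L with _ | ⟨c, L'⟩
      · -- L = [] : no cancellation
        rw [List.append_nil, reduce_eq_self hB]
        exact List.take_prefix _ _
      · subst hLc
        by_cases hc : c = (bb.1, !bb.2)
        · -- cancellation of bb with c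
          subst hc
          rcases q with _ | q
          · exact absurd (by simp [hinv]) hQ
          · have hB' : B'.Chain' R := (List.isChain_append.mp hB).1
            have hL' : L'.Chain' R := hL.tail
            have hstep : FreeGroup.Red.Step (B' ++ [bb] ++ ((bb.1, !bb.2) :: L'))
                (B' ++ L') := by
              have := @FreeGroup.Red.Step.not (Fin 3) B' L' bb.1 bb.2
              simpa using this
            rw [FreeGroup.reduce.Step.eq hstep]
            have hQ' : ¬((FreeGroup.invRev B').take (q + 1) <+: L') := by
              intro hpre
              refine hQ ?_
              rw [hinv]
              have : (bb.1, !bb.2) :: List.take (q + 1) (FreeGroup.invRev B') <+: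
                  (bb.1, !bb.2) :: L' := List.cons_prefix_cons.mpr ⟨rfl, hpre⟩
              simpa using this
            simp only [List.length_append, List.length_cons, List.length_nil] at hpq
            have hple : p ≤ B'.length := by omega
            have := main (q + 1) B' L' p hB' hL' (by omega) hQ'
            calc (B' ++ [bb]).take p = B'.take p := by
                  rw [List.take_append_of_le_length hple]
              _ <+: _ := this
        · -- no cancellation at the junction
          have hRbc : R bb c := by
            rintro ⟨h1, h2⟩
            exact hc (Prod.ext h1.symm (by simp [h2]))
          have hred : ((B' ++ [bb]) ++ (c :: L')).Chain' R := by
            simp only [List.Chain']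
            rw [List.isChain_append]
            refine ⟨hB, hL, ?_⟩
            intro a ha b hb
            simp only [List.getLast?_append, List.getLast?_singleton] at ha
            rw [show ((some bb).or B'.getLast?) = some bb from rfl] at ha
            simp only [Option.mem_def, Option.some.injEq] at ha
            simp only [List.head?_cons, Option.mem_def, Option.some.injEq] at hb
            subst hb
            rw [← ha]
            exact hRbc
          rw [reduce_eq_self hred]
          exact (List.take_prefix _ _).trans (List.prefix_append _ _)


/-! ### The concrete ping-pong data -/

/-- The four reduced words (a new basis obtained from the original one by an
automorphism of `F₄` conjugating the second generator by `x y⁻¹ x⁻¹`). -/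
def BW : Fin 4 → List Ltr := fun i =>
  if i = 0 then [(0, true)]
  else if i = 1 then
    [(2, false), (0, true), (1, true), (0, false), (2, true), (0, false),
     (2, false), (0, true), (1, false), (0, false), (2, true)]
  else if i = 2 then [(1, true)]
  else [(2, true), (0, false), (2, false), (0, true), (1, false), (0, false),
        (2, true), (0, true), (2, false)]

/-- Prefix lengths. -/
def pl : Fin 4 → ℕ := fun i => if i = 0 then 1 else if i = 1 then 6 else if i = 2 then 1 else 5

def P (i : Fin 4) : List Ltr := (BW i).take (pl i)

def Q (i : Fin 4) : List Ltr := (FreeGroup.invRev (BW i)).take (pl i)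

def bgen : Fin 4 → FreeGroup (Fin 3) := fun i => FreeGroup.mk (BW i)

def X (i : Fin 4) : Set (FreeGroup (Fin 3)) := {w | P i <+: w.toWord}

def Y (i : Fin 4) : Set (FreeGroup (Fin 3)) := {w | Q i <+: w.toWord}

lemma hBchain : ∀ i, (BW i).Chain' R := fun i => by
  have h : FreeGroup.reduce (BW i) = BW i := by revert i; decide
  rw [← h]; exact chain'_reduce _
lemma hBinvchain : ∀ i, (FreeGroup.invRev (BW i)).Chain' R := fun i => by
  have h : FreeGroup.reduce (FreeGroup.invRev (BW i)) = FreeGroup.invRev (BW i) := by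
    revert i; decide
  rw [← h]; exact chain'_reduce _
lemma hlen : ∀ i, pl i + pl i ≤ (BW i).length + 1 := by decide
lemma hPchain : ∀ i, (P i).Chain' R := fun i => by
  have h : FreeGroup.reduce (P i) = P i := by revert i; decide
  rw [← h]; exact chain'_reduce _
lemma dPP : ∀ i j : Fin 4, i ≠ j → ¬(P i <+: P j) := by decide
lemma dQQ : ∀ i j : Fin 4, i ≠ j → ¬(Q i <+: Q j) := by decide
lemma dPQ : ∀ i j : Fin 4, ¬(P i <+: Q j) := by decide
lemma dQP : ∀ i j : Fin 4, ¬(Q i <+: P j) := by decide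

lemma hXnonempty : ∀ i, (X i).Nonempty := by
  intro i
  refine ⟨FreeGroup.mk (P i), ?_⟩
  show P i <+: (FreeGroup.mk (P i)).toWord
  rw [FreeGroup.toWord_mk, reduce_eq_self (hPchain i)]

lemma hXdisj : Pairwise (Function.onFun Disjoint X) := by
  intro i j hij
  rw [Function.onFun, Set.disjoint_left]
  intro w hwi hwj
  rcases List.prefix_or_prefix_of_prefix hwi hwj with h | h
  · exact dPP i j hij h
  · exact dPP j i hij.symm h

lemma hYdisj : Pairwise (Function.onFun Disjoint Y) := by
  intro i j hij
  rw [Function.onFun, Set.disjoint_left]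
  intro w hwi hwj
  rcases List.prefix_or_prefix_of_prefix hwi hwj with h | h
  · exact dQQ i j hij h
  · exact dQQ j i hij.symm h

lemma hXYdisj : ∀ i j, Disjoint (X i) (Y j) := by
  intro i j
  rw [Set.disjoint_left]
  intro w hwi hwj
  rcases List.prefix_or_prefix_of_prefix hwi hwj with h | h
  · exact dPQ i j h
  · exact dQP j i h

lemma hX : ∀ i, bgen i • (Y i)ᶜ ⊆ X i := by
  intro i w hw
  rcases hw with ⟨v, hv, rfl⟩
  show P i <+: (bgen i • v).toWord
  have h1 : bgen i • v = FreeGroup.mk (BW i ++ v.toWord) := by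
    rw [smul_eq_mul]
    conv_lhs => rw [bgen, ← FreeGroup.mk_toWord (x := v)]
    rw [FreeGroup.mul_mk]
  rw [h1, FreeGroup.toWord_mk]
  exact main (pl i) (BW i) v.toWord (pl i) (hBchain i) (chain'_toWord v) (hlen i) hv

lemma hY : ∀ i, bgen⁻¹ i • (X i)ᶜ ⊆ Y i := by
  intro i w hw
  rcases hw with ⟨v, hv, rfl⟩
  show Q i <+: (bgen⁻¹ i • v).toWord
  have h1 : bgen⁻¹ i • v = FreeGroup.mk (FreeGroup.invRev (BW i) ++ v.toWord) := by
    rw [Pi.inv_apply, smul_eq_mul]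
    conv_lhs => rw [bgen, ← FreeGroup.mk_toWord (x := v), FreeGroup.inv_mk]
    rw [FreeGroup.mul_mk]
  rw [h1, FreeGroup.toWord_mk]
  have hv' : ¬((FreeGroup.invRev (FreeGroup.invRev (BW i))).take (pl i) <+: v.toWord) := by
    rw [FreeGroup.invRev_invRev]
    exact hv
  have hlen' : pl i + pl i ≤ (FreeGroup.invRev (BW i)).length + 1 := by
    rw [FreeGroup.invRev_length]
    exact hlen i
  exact main (pl i) (FreeGroup.invRev (BW i)) v.toWord (pl i) (hBinvchain i)
    (chain'_toWord v) hlen' hv'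

lemma bgen_inj : Function.Injective (FreeGroup.lift bgen) :=
  FreeGroup.injective_lift_of_ping_pong bgen X Y hXnonempty hXdisj hYdisj hXYdisj hX hY

/-! ### Change of basis -/

/-- The conjugating word `g₁ g₃⁻¹ g₁⁻¹` in `F₄`. -/
def w4 : FreeGroup (Fin 4) :=
  FreeGroup.of 0 * (FreeGroup.of 2)⁻¹ * (FreeGroup.of 0)⁻¹

/-- Automorphism of `F₄` conjugating the second generator by `w4`. -/
def tau : FreeGroup (Fin 4) →* FreeGroup (Fin 4) :=
  FreeGroup.lift (fun i => if i = 1 then w4 * FreeGroup.of 1 * w4⁻¹ else FreeGroup.of i)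

def tau' : FreeGroup (Fin 4) →* FreeGroup (Fin 4) :=
  FreeGroup.lift (fun i => if i = 1 then w4⁻¹ * FreeGroup.of 1 * w4 else FreeGroup.of i)

lemma of_eq (a : Fin 3) : FreeGroup.of a = FreeGroup.mk [(a, true)] := rfl

lemma of_eq4 (a : Fin 4) : FreeGroup.of a = FreeGroup.mk [(a, true)] := rfl

lemma tau_left_inv : tau'.comp tau = MonoidHom.id _ := by
  apply FreeGroup.ext_hom
  intro a
  fin_cases a <;>
    simp [tau, tau', w4, FreeGroup.lift_apply_of, _root_.map_mul, _root_.map_inv,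
      of_eq4, FreeGroup.inv_mk, FreeGroup.mul_mk, FreeGroup.invRev] <;>
    exact FreeGroup.reduce.exact (by decide)

lemma tau_inj : Function.Injective tau := by
  intro u v h
  have := congrArg tau' h
  simpa only [← MonoidHom.comp_apply, tau_left_inv, MonoidHom.id_apply] using this

/-- The original tuple of images. -/
def afun : Fin 4 → FreeGroup (Fin 3) := fun i =>
  if i = 0 then FreeGroup.of 0
  else if i = 1 then
    FreeGroup.of 0 * (FreeGroup.of 1)⁻¹ * (FreeGroup.of 0)⁻¹ * (FreeGroup.of 2)⁻¹ *
      FreeGroup.of 0 * FreeGroup.of 1 * (FreeGroup.of 0)⁻¹ * FreeGroup.of 2 *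
      (FreeGroup.of 0)⁻¹ * (FreeGroup.of 2)⁻¹ * FreeGroup.of 0 * (FreeGroup.of 1)⁻¹ *
      (FreeGroup.of 0)⁻¹ * FreeGroup.of 2 * FreeGroup.of 0 * FreeGroup.of 1 *
      (FreeGroup.of 0)⁻¹
  else if i = 2 then FreeGroup.of 1
  else
    FreeGroup.of 2 * (FreeGroup.of 0)⁻¹ * (FreeGroup.of 2)⁻¹ * FreeGroup.of 0 *
      (FreeGroup.of 1)⁻¹ * (FreeGroup.of 0)⁻¹ * FreeGroup.of 2 * FreeGroup.of 0 *
      (FreeGroup.of 2)⁻¹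

lemma key : FreeGroup.lift afun = (FreeGroup.lift bgen).comp tau := by
  apply FreeGroup.ext_hom
  intro a
  fin_cases a <;>
    simp [tau, w4, afun, bgen, BW, FreeGroup.lift_apply_of, _root_.map_mul, _root_.map_inv,
      of_eq, of_eq4, FreeGroup.inv_mk, FreeGroup.mul_mk, FreeGroup.invRev] <;>
    exact FreeGroup.reduce.exact (by decide)

lemma afun_inj : Function.Injective (FreeGroup.lift afun) := by
  rw [key, MonoidHom.coe_comp]
  exact bgen_inj.comp tau_inj

end Claim35


/-- Claim 3.5: the homomorphism `F₄ → F₃` of free groups determined by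
`g₁ ↦ x`, `g₂ ↦ x y⁻¹ x⁻¹ z⁻¹ x y x⁻¹ z x⁻¹ z⁻¹ x y⁻¹ x⁻¹ z x y x⁻¹`, `g₃ ↦ y`,
`g₄ ↦ z x⁻¹ z⁻¹ x y⁻¹ x⁻¹ z x z⁻¹` is injective. -/
theorem claim_3_5 :
    let x : FreeGroup (Fin 3) := FreeGroup.of 0
    let y : FreeGroup (Fin 3) := FreeGroup.of 1
    let z : FreeGroup (Fin 3) := FreeGroup.of 2
    Function.Injective
      (FreeGroup.lift (fun i : Fin 4 =>
        if i = 0 then x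
        else if i = 1 then
          x * y⁻¹ * x⁻¹ * z⁻¹ * x * y * x⁻¹ * z * x⁻¹ * z⁻¹ * x * y⁻¹ * x⁻¹ * z * x * y * x⁻¹
        else if i = 2 then y
        else z * x⁻¹ * z⁻¹ * x * y⁻¹ * x⁻¹ * z * x * z⁻¹)) := by
  show Function.Injective (FreeGroup.lift Claim35.afun)
  exact Claim35.afun_inj
end
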